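/- Let D be a finite three-dimensional diagram, ordered so that T_{(i,j,k)} > T_{(i',j',k')} iff (i,j,k) precedes (i',j',k') lexicographically, with the lexicographic monomial order on K[T_D]. Let u ∈ D and let D_u be the subdiagram of D obtained by removing all points lexicographically preceding u. Then J_D ∩ K[T_v : v ∈ D_u] = J_{D_u}, and the initial ideal satisfies in(J_D) ∩ K[T_v : v ∈ D_u] = in(J_{D_u}). -/

import Mathlib

open MvPolynomial

open scoped Classical

/-- Lattice points of `ℤ₊³`, equipped with the lexicographic (linear) order on
triples. -/
abbrev PtL : Type := ℕ ×ₗ (ℕ ×ₗ ℕ)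

/-- First coordinate of a point. -/
def c1 (v : PtL) : ℕ := (ofLex v).1

/-- Second coordinate of a point. -/
def c2 (v : PtL) : ℕ := (ofLex (ofLex v).2).1

/-- Third coordinate of a point. -/
def c3 (v : PtL) : ℕ := (ofLex (ofLex v).2).2

/-- The toric map sending `T_{(i,j,k)} ↦ x_i y_j z_k`. -/
noncomputable def toricMapL (K : Type*) [Field K] :
    MvPolynomial PtL K →ₐ[K] MvPolynomial (Fin 3 × ℕ) K :=
  aeval fun v => X (0, c1 v) * X (1, c2 v) * X (2, c3 v)

/-- The toric ideal `J_D` of a diagram `D`, as the set of polynomials supported on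
`D` that are killed by the toric map. -/
def JD (K : Type*) [Field K] (D : Finset PtL) : Set (MvPolynomial PtL K) :=
  {f | f ∈ supported K (↑D : Set PtL) ∧ toricMapL K f = 0}

/-- The initial ideal of a set of polynomials with respect to the lexicographic
monomial order in which `T_u > T_v` iff the triple `u` lexicographically precedes
the triple `v`: it is spanned by the monomials `T^m` such that `m` is the maximal
(with respect to the induced lexicographic order `Finsupp.Lex` on exponent vectors)
element of the support of some member of the set. -/
noncomputable def initialIdeal (K : Type*) [Field K] (J : Set (MvPolynomial PtL K)) :
    Ideal (MvPolynomial PtL K) :=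
  Ideal.span {g | ∃ f ∈ J, ∃ m : PtL →₀ ℕ,
    (f.support.image (fun e : PtL →₀ ℕ => toLex e)).max = ((toLex m : Lex (PtL →₀ ℕ)) : WithBot (Lex (PtL →₀ ℕ))) ∧
    g = monomial m 1}

/-!
Since `T_v` with lexicographically small `v` are the most significant variables, the
lexicographic order is an elimination order: if the leading monomial of `f` involves only
variables `T_v` with `v ≥ u`, then so does every monomial of `f`. Thus a polynomial of
`J_D` whose leading exponent is supported on `D_u` already lies in `J_{D_u}`. A monomial
of `in(J_D)` in `K[T_{D_u}]` is divisible by such a leading monomial, so it lies in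
`in(J_{D_u})`; the remaining inclusions are monotonicity.
-/

theorem Finsupp.support_subset_of_toLex_le {σ : Type*} [LinearOrder σ] {s : Set σ}
    (hs : IsUpperSet s) {e m : σ →₀ ℕ} (hem : toLex e ≤ toLex m) (hm : ↑m.support ⊆ s) :
    ↑e.support ⊆ s := by
  intro v hv
  by_contra hvs
  rcases hem.eq_or_lt with heq | hlt
  · exact hvs (hm (by rwa [← toLex_inj.mp heq]))
  · obtain ⟨i, hagree, hlti⟩ := Finsupp.Lex.lt_iff.1 hlt
    have hi : i ∈ s := hm (Finsupp.mem_support_iff.2 (Nat.ne_zero_of_lt hlti))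
    have hvi : v < i := lt_of_not_ge fun hiv => hvs (hs hiv hi)
    have hev : e v ≠ 0 := Finsupp.mem_support_iff.1 hv
    exact hvs (hm (Finsupp.mem_support_iff.2 (hagree v hvi ▸ hev)))

namespace MvPolynomial

variable {σ R : Type*} [CommSemiring R]

theorem mem_supported_of_forall_toLex_le [LinearOrder σ] {s : Set σ} (hs : IsUpperSet s)
    {f : MvPolynomial σ R} {m : σ →₀ ℕ} (hle : ∀ e ∈ f.support, toLex e ≤ toLex m)
    (hm : ↑m.support ⊆ s) : f ∈ supported R s := by
  rw [mem_supported]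
  intro v hv
  obtain ⟨e, he, hve⟩ := (mem_vars_iff_mem_support v).1 hv
  exact Finsupp.support_subset_of_toLex_le hs (hle e he) hm hve

theorem mem_ideal_span_monomial_image_supported {S : Set (σ →₀ ℕ)} {s : Set σ}
    {x : MvPolynomial σ R} (hx : x ∈ Ideal.span ((fun m => monomial m (1 : R)) '' S))
    (hxs : x ∈ supported R s) :
    x ∈ Ideal.span ((fun m => monomial m (1 : R)) '' {m ∈ S | ↑m.support ⊆ s}) := by
  rw [mem_ideal_span_monomial_image] at hx ⊢
  intro xi hxi
  obtain ⟨m, hmS, hle⟩ := hx xi hxi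
  refine ⟨m, ⟨hmS, fun v hv => mem_supported.1 hxs ?_⟩, hle⟩
  exact (mem_vars_iff_mem_support v).2 ⟨xi, hxi, Finsupp.support_mono hle hv⟩

end MvPolynomial

section

variable {K : Type*} [Field K]

def leadingExponents (J : Set (MvPolynomial PtL K)) : Set (PtL →₀ ℕ) :=
  {m | ∃ f ∈ J, (f.support.image toLex).max = ↑(toLex m)}

theorem initialIdeal_eq_span_leadingExponents (J : Set (MvPolynomial PtL K)) :
    initialIdeal K J = Ideal.span ((fun m => monomial m (1 : K)) '' leadingExponents J) := by
  unfold initialIdeal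
  congr 1
  ext g
  constructor
  · rintro ⟨f, hf, m, hm, rfl⟩
    exact ⟨m, ⟨f, hf, hm⟩, rfl⟩
  · rintro ⟨m, ⟨f, hf, hm⟩, rfl⟩
    exact ⟨f, hf, m, hm, rfl⟩

theorem initialIdeal_mono {J J' : Set (MvPolynomial PtL K)} (h : J ⊆ J') :
    initialIdeal K J ≤ initialIdeal K J' :=
  Ideal.span_mono fun _ ⟨f, hf, hm⟩ => ⟨f, h hf, hm⟩

theorem JD_mono {D D' : Finset PtL} (h : D ⊆ D') : JD K D ⊆ JD K D' :=
  fun _ ⟨hf, hf0⟩ => ⟨supported_mono (Finset.coe_subset.2 h) hf, hf0⟩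

theorem JD_inter_supported {D D' : Finset PtL} (h : D' ⊆ D) :
    JD K D ∩ (supported K (↑D' : Set PtL) : Set (MvPolynomial PtL K)) = JD K D' := by
  ext f
  constructor
  · rintro ⟨⟨_, hf0⟩, hfD'⟩
    exact ⟨hfD', hf0⟩
  · intro hf
    exact ⟨JD_mono h hf, hf.1⟩

theorem leadingExponents_JD_supported_subset (D : Finset PtL) (u : PtL) :
    {m ∈ leadingExponents (JD K D) | ↑m.support ⊆ (↑(D.filter (u ≤ ·)) : Set PtL)} ⊆
      leadingExponents (JD K (D.filter (u ≤ ·))) := by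
  rintro m ⟨⟨f, hfJ, hmax⟩, hm⟩
  have hmu : ↑m.support ⊆ Set.Ici u := fun v hv => (Finset.mem_filter.1 (hm hv)).2
  have hle : ∀ e ∈ f.support, toLex e ≤ toLex m := fun e he =>
    WithBot.coe_le_coe.1 (hmax ▸ Finset.le_max (Finset.mem_image_of_mem _ he))
  have hfu : f ∈ supported K (Set.Ici u) :=
    mem_supported_of_forall_toLex_le (isUpperSet_Ici u) hle hmu
  refine ⟨f, ⟨?_, hfJ.2⟩, hmax⟩
  rw [mem_supported] at hfu ⊢
  intro v hv
  exact Finset.mem_filter.2 ⟨mem_supported.1 hfJ.1 hv, hfu hv⟩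

end

theorem stmt2_general {K : Type*} [Field K] (D : Finset PtL) (u : PtL)
    (Du : Finset PtL) (hDu : Du = D.filter fun v => u ≤ v) :
    JD K D ∩ (supported K (↑Du : Set PtL) : Set (MvPolynomial PtL K)) = JD K Du ∧
    ((initialIdeal K (JD K D) : Set (MvPolynomial PtL K)) ∩
        (supported K (↑Du : Set PtL) : Set (MvPolynomial PtL K)) =
      (initialIdeal K (JD K Du) : Set (MvPolynomial PtL K)) ∩
        (supported K (↑Du : Set PtL) : Set (MvPolynomial PtL K))) := by
  subst hDu
  have hsub : D.filter (u ≤ ·) ⊆ D := Finset.filter_subset _ _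
  refine ⟨JD_inter_supported hsub, Set.ext fun x => ⟨?_, ?_⟩⟩
  · rintro ⟨hx, hxs⟩
    rw [SetLike.mem_coe, initialIdeal_eq_span_leadingExponents] at hx
    refine ⟨?_, hxs⟩
    rw [SetLike.mem_coe, initialIdeal_eq_span_leadingExponents]
    exact Ideal.span_mono (Set.image_mono (leadingExponents_JD_supported_subset D u))
      (mem_ideal_span_monomial_image_supported hx hxs)
  · rintro ⟨hx, hxs⟩
    exact ⟨initialIdeal_mono (JD_mono hsub) hx, hxs⟩

/-- for `D_u` the subdiagram obtained by removing from `D` all points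
lexicographically preceding `u`, one has `J_D ∩ K[T_{D_u}] = J_{D_u}` and
`in(J_D) ∩ K[T_{D_u}] = in(J_{D_u})` (both intersections taken inside
`K[T_{D_u}]`). -/
theorem stmt2 {K : Type*} [Field K] (D : Finset PtL) (u : PtL) (hu : u ∈ D)
    (Du : Finset PtL) (hDu : Du = D.filter fun v => u ≤ v) :
    JD K D ∩ (supported K (↑Du : Set PtL) : Set (MvPolynomial PtL K)) = JD K Du ∧
    ((initialIdeal K (JD K D) : Set (MvPolynomial PtL K)) ∩
        (supported K (↑Du : Set PtL) : Set (MvPolynomial PtL K)) =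
      (initialIdeal K (JD K Du) : Set (MvPolynomial PtL K)) ∩
        (supported K (↑Du : Set PtL) : Set (MvPolynomial PtL K))) :=
  stmt2_general D u Du hDu
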